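/- Let T be a finite simple graph and ℓ ≥ 0 an even integer, and let T^g denote the gadget subdivision of T with parameter ℓ. Then the stability number of T^g satisfies α(T^g) = α(T) + (ℓ+1)·|E(T)|. -/

import Mathlib

attribute [local instance] Classical.propDecidable

open Matrix Filter

noncomputable section

/-- The nonnegative rank of a real matrix: the least `r` such that `M = T * U`
with `T`, `U` entrywise nonnegative. -/
def nnegRank {m n : Type*} (M : Matrix m n ℝ) : ℕ :=
  sInf { r : ℕ | ∃ (T : Matrix m (Fin r) ℝ) (U : Matrix (Fin r) n ℝ),
    (∀ i j, 0 ≤ T i j) ∧ (∀ i j, 0 ≤ U i j) ∧ M = T * U }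

/-- An LP formulation of size `r` of the maximization problem with feasible solutions `S`,
objective functions indexed by `F` (given by `obj`), and approximation guarantees `guar`:
a system of `r` linear inequalities and `k` linear equations in `ℝ^d`, realizations `x s` of
feasible solutions (satisfying the system), realizations `w f` of objective functions
(`⟪w f, x s⟫ = obj f s`), such that the LP value is at most the guarantee. -/
def IsLPFormulation {S F : Type*} (obj : F → S → ℝ) (guar : F → ℝ) (r : ℕ) : Prop :=
  ∃ (d k : ℕ) (Ai : Matrix (Fin r) (Fin d) ℝ) (bi : Fin r → ℝ)
    (Ae : Matrix (Fin k) (Fin d) ℝ) (be : Fin k → ℝ)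
    (x : S → Fin d → ℝ) (w : F → Fin d → ℝ),
    (∀ s, (∀ i, Ai.mulVec (x s) i ≤ bi i) ∧ Ae.mulVec (x s) = be) ∧
    (∀ f s, w f ⬝ᵥ x s = obj f s) ∧
    (∀ f (y : Fin d → ℝ), (∀ i, Ai.mulVec y i ≤ bi i) → Ae.mulVec y = be →
      w f ⬝ᵥ y ≤ guar f)

/-- Formulation complexity: minimum size of an LP formulation. -/
def xcLP {S F : Type*} (obj : F → S → ℝ) (guar : F → ℝ) : ℕ :=
  sInf { r | IsLPFormulation obj guar r }

/-- A stable (independent) set in a graph. -/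
def IsStableSet {V : Type*} (G : SimpleGraph V) (s : Finset V) : Prop :=
  ∀ u ∈ s, ∀ v ∈ s, ¬ G.Adj u v

/-- The stability number of a graph. -/
def stabNum {V : Type*} [Fintype V] (G : SimpleGraph V) : ℕ :=
  sSup { k | ∃ s : Finset V, IsStableSet G s ∧ s.card = k }

/-- The formulation complexity of the maximum stable set problem `STAB(G)`:
feasible solutions are the stable sets of `G`, objective functions are
`f_a(S) = |S ∩ a|` for `a ⊆ V(G)`, guarantees are `α(G[a])`. -/
def xcSTAB {V : Type*} [Fintype V] (G : SimpleGraph V) : ℕ :=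
  xcLP (fun (a : Finset V) (s : {s : Finset V // IsStableSet G s}) => ((s.val ∩ a).card : ℝ))
       (fun a : Finset V => (stabNum (G.induce (↑a : Set V)) : ℝ))

/-- Probability of an event under the Erdős–Rényi distribution `G(n,p)`. -/
def erProb (n : ℕ) (p : ℝ) (E : SimpleGraph (Fin n) → Prop) : ℝ :=
  ∑ G : SimpleGraph (Fin n),
    if E G then p ^ Nat.card G.edgeSet * (1 - p) ^ (n.choose 2 - Nat.card G.edgeSet) else 0

/-- The smaller endpoint of an unordered pair. -/
def sym2Min {α : Type*} [LinearOrder α] (e : Sym2 α) : α :=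
  Sym2.lift ⟨fun a b => min a b, fun a b => min_comm a b⟩ e

/-- The larger endpoint of an unordered pair. -/
def sym2Max {α : Type*} [LinearOrder α] (e : Sym2 α) : α :=
  Sym2.lift ⟨fun a b => max a b, fun a b => max_comm a b⟩ e

/-- Adjacency of the gadget subdivision `T^g` with parameter `ℓ`: every edge `ij` of `T`
is replaced by a path with `2ℓ+3` edges between `i` and `j`, whose `2ℓ+2` internal vertices
are new and pairwise distinct across edges. -/
def gadgetAdj {α : Type*} [LinearOrder α] (T : SimpleGraph α) (ℓ : ℕ) :
    (α ⊕ (↥T.edgeSet × Fin (2*ℓ+2))) → (α ⊕ (↥T.edgeSet × Fin (2*ℓ+2))) → Prop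
  | Sum.inl _, Sum.inl _ => False
  | Sum.inl u, Sum.inr ek =>
      (ek.2.val = 0 ∧ u = sym2Min ek.1.val) ∨ (ek.2.val = 2*ℓ+1 ∧ u = sym2Max ek.1.val)
  | Sum.inr ek, Sum.inl u =>
      (ek.2.val = 0 ∧ u = sym2Min ek.1.val) ∨ (ek.2.val = 2*ℓ+1 ∧ u = sym2Max ek.1.val)
  | Sum.inr ek, Sum.inr ek' =>
      ek.1 = ek'.1 ∧ (ek.2.val + 1 = ek'.2.val ∨ ek'.2.val + 1 = ek.2.val)

/-- The gadget subdivision `T^g` of a graph `T` with parameter `ℓ`. -/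
def gadget {α : Type*} [LinearOrder α] (T : SimpleGraph α) (ℓ : ℕ) :
    SimpleGraph (α ⊕ (↥T.edgeSet × Fin (2*ℓ+2))) where
  Adj := gadgetAdj T ℓ
  symm := by
    refine ⟨?_⟩
    rintro (u | ek) (v | ek') h
    · exact h.elim
    · exact h
    · exact h
    · exact ⟨h.1.symm, h.2.symm⟩
  loopless := by
    refine ⟨?_⟩
    rintro (u | ek) h
    · exact h.elim
    · exact h.2.elim (fun h' => by omega) (fun h' => by omega)

/-- A simple graph with vertex set contained in `[n] = {1, …, n}` (modelled as `Fin n`):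
a pair of a simple graph on `Fin n` and its vertex set, containing all endpoints of edges. -/
def GraphOn (n : ℕ) : Type :=
  { GV : SimpleGraph (Fin n) × Finset (Fin n) //
      ∀ u v, GV.1.Adj u v → u ∈ GV.2 ∧ v ∈ GV.2 }

instance (n : ℕ) : Fintype (GraphOn n) :=
  Subtype.fintype _

/-- The stability number of a graph with vertex set `⊆ [n]`:
stable sets must consist of vertices of the graph. -/
def alphaOn {n : ℕ} (G : GraphOn n) : ℕ :=
  sSup { k | ∃ s : Finset (Fin n), s ⊆ G.val.2 ∧ IsStableSet G.val.1 s ∧ s.card = k }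

/-- Probability of an event for a random family of graphs, where each graph with vertex
set `⊆ [n]` is included in the family independently with probability `p`. -/
def famProb (n : ℕ) (p : ℝ) (E : Finset (GraphOn n) → Prop) : ℝ :=
  ∑ 𝒢 : Finset (GraphOn n),
    if E 𝒢 then p ^ 𝒢.card * (1 - p) ^ (Fintype.card (GraphOn n) - 𝒢.card) else 0

end

/-! A maximum stable set `S` of `T` extends to `T^g` by taking, on each path, every other
internal vertex, starting next to whichever end of the edge is not in `S`: this adds `ℓ+1`
vertices per edge. Conversely, a stable set of `T^g` meets the `2ℓ+2` internal vertices of a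
path in at most `ℓ+1` vertices, and in at most `ℓ` when it contains both ends of the edge;
deleting one end of each such edge leaves a stable set of `T`. -/

open Finset

section StableSets

variable {V : Type*} (G : SimpleGraph V)

lemma nonempty_stableSet_cards :
    {k | ∃ s : Finset V, IsStableSet G s ∧ s.card = k}.Nonempty :=
  ⟨0, ∅, by simp [IsStableSet], rfl⟩

variable [Fintype V]

lemma bddAbove_stableSet_cards :
    BddAbove {k | ∃ s : Finset V, IsStableSet G s ∧ s.card = k} :=
  ⟨Fintype.card V, by rintro k ⟨s, -, rfl⟩; exact s.card_le_univ⟩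

lemma le_stabNum {s : Finset V} (hs : IsStableSet G s) : s.card ≤ stabNum G :=
  le_csSup (bddAbove_stableSet_cards G) ⟨s, hs, rfl⟩

lemma stabNum_le {m : ℕ} (h : ∀ s : Finset V, IsStableSet G s → s.card ≤ m) :
    stabNum G ≤ m :=
  csSup_le (nonempty_stableSet_cards G) fun _ ⟨s, hs, hk⟩ => hk ▸ h s hs

lemma exists_isStableSet_card_eq_stabNum :
    ∃ s : Finset V, IsStableSet G s ∧ s.card = stabNum G :=
  Nat.sSup_mem (nonempty_stableSet_cards G) (bddAbove_stableSet_cards G)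

end StableSets

lemma exists_isStableSet_card_add_le {V : Type*} (G : SimpleGraph V) (A : Finset V)
    (F : Finset (Sym2 V)) (hF : ∀ u ∈ A, ∀ v ∈ A, G.Adj u v → s(u, v) ∈ F) :
    ∃ B : Finset V, IsStableSet G B ∧ A.card ≤ B.card + F.card := by
  refine ⟨A \ F.image (fun e => e.out.1), ?_, ?_⟩
  · intro u hu v hv huv
    simp only [Finset.mem_sdiff] at hu hv
    have hmem : s(u, v).out.1 ∈ F.image (fun e => e.out.1) :=
      mem_image_of_mem _ (hF u hu.1 v hv.1 huv)
    rcases Sym2.mem_iff.mp (Sym2.out_fst_mem s(u, v)) with h | h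
    · exact hu.2 (h ▸ hmem)
    · exact hv.2 (h ▸ hmem)
  · calc A.card ≤ (A \ F.image (fun e => e.out.1)).card + (F.image fun e => e.out.1).card :=
          card_le_card_sdiff_add_card
      _ ≤ _ := Nat.add_le_add_left card_image_le _

lemma card_le_of_subset_Ico_of_add_one_notMem {s : Finset ℕ} {a n : ℕ}
    (hs : s ⊆ Ico a (a + 2 * n)) (h : ∀ i ∈ s, i + 1 ∉ s) : s.card ≤ n := by
  simpa using card_le_card_of_injOn (fun i => (i - a) / 2) (t := range n)
    (fun i hi => by have := mem_Ico.mp (hs hi); simp only [coe_range, Set.mem_Iio]; omega)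
    (fun i hi j hj hij => by
      have hi' := mem_Ico.mp (hs hi)
      have hj' := mem_Ico.mp (hs hj)
      have hij' : i + 1 ≠ j := fun e => h i hi (e ▸ hj)
      have hji' : j + 1 ≠ i := fun e => h j hj (e ▸ hi)
      simp only at hij
      omega)

section Sym2MinMax

variable {α : Type*} [LinearOrder α]

lemma mk_sym2Min_sym2Max (e : Sym2 α) : s(sym2Min e, sym2Max e) = e := by
  induction e using Sym2.ind with
  | _ a b =>
    rcases le_total a b with h | h
    · simp [sym2Min, sym2Max, h]
    · simp [sym2Min, sym2Max, h, Sym2.eq_swap]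

lemma adj_sym2Min_sym2Max {T : SimpleGraph α} {e : Sym2 α} (he : e ∈ T.edgeSet) :
    T.Adj (sym2Min e) (sym2Max e) := by
  rwa [← SimpleGraph.mem_edgeSet, mk_sym2Min_sym2Max]

lemma mem_sym2_iff_sym2Min_mem_and_sym2Max_mem {A : Finset α} {e : Sym2 α} :
    e ∈ A.sym2 ↔ sym2Min e ∈ A ∧ sym2Max e ∈ A := by
  rw [← mk_mem_sym2_iff, mk_sym2Min_sym2Max]

end Sym2MinMax

section Gadget

variable {α : Type*} [LinearOrder α] {T : SimpleGraph α} {ℓ : ℕ}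

lemma gadget_adj_inl_inr {u : α} {e : T.edgeSet} {k : Fin (2 * ℓ + 2)} :
    (gadget T ℓ).Adj (.inl u) (.inr (e, k)) ↔
      (k.val = 0 ∧ u = sym2Min e.val) ∨ (k.val = 2 * ℓ + 1 ∧ u = sym2Max e.val) :=
  Iff.rfl

lemma gadget_adj_inr_inr {e e' : T.edgeSet} {i j : Fin (2 * ℓ + 2)} :
    (gadget T ℓ).Adj (.inr (e, i)) (.inr (e', j)) ↔
      e = e' ∧ (i.val + 1 = j.val ∨ j.val + 1 = i.val) :=
  Iff.rfl

lemma card_path_add_le {S : Finset (α ⊕ (T.edgeSet × Fin (2 * ℓ + 2)))}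
    (hS : IsStableSet (gadget T ℓ) S) (e : T.edgeSet) :
    #{k | .inr (e, k) ∈ S} + (if e.val ∈ S.toLeft.sym2 then 1 else 0) ≤ ℓ + 1 := by
  set P := ({k | .inr (e, k) ∈ S} : Finset (Fin (2 * ℓ + 2))).map Fin.valEmbedding
  have hmem : ∀ n ∈ P, ∃ k : Fin (2 * ℓ + 2), k.val = n ∧ .inr (e, k) ∈ S := by
    simp only [P, Finset.mem_map, mem_filter, mem_univ, true_and, Fin.valEmbedding_apply]
    rintro _ ⟨k, hk, rfl⟩
    exact ⟨k, rfl, hk⟩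
  have hP : ∀ n ∈ P, n + 1 ∉ P := by
    intro _ hn hn1
    obtain ⟨i, rfl, hi⟩ := hmem _ hn
    obtain ⟨j, hj, hj'⟩ := hmem _ hn1
    exact hS _ hi _ hj' (gadget_adj_inr_inr.2 ⟨rfl, .inl hj.symm⟩)
  rw [← show #P = #{k | .inr (e, k) ∈ S} from card_map _]
  split_ifs with hends
  · obtain ⟨hmin, hmax⟩ := mem_sym2_iff_sym2Min_mem_and_sym2Max_mem.1 hends
    rw [mem_toLeft] at hmin hmax
    suffices P ⊆ Ico 1 (1 + 2 * ℓ) by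
      have := card_le_of_subset_Ico_of_add_one_notMem this hP
      omega
    intro _ hn
    obtain ⟨k, rfl, hk⟩ := hmem _ hn
    have hk0 : k.val ≠ 0 := fun h => hS _ hmin _ hk (gadget_adj_inl_inr.2 (.inl ⟨h, rfl⟩))
    have hk1 : k.val ≠ 2 * ℓ + 1 := fun h =>
      hS _ hmax _ hk (gadget_adj_inl_inr.2 (.inr ⟨h, rfl⟩))
    have := k.isLt
    rw [mem_Ico]
    omega
  · refine card_le_of_subset_Ico_of_add_one_notMem (a := 0) (fun _ hn => ?_) hP
    obtain ⟨k, rfl, -⟩ := hmem _ hn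
    have := k.isLt
    rw [mem_Ico]
    omega

lemma card_le_of_isStableSet_gadget [Fintype α]
    {S : Finset (α ⊕ (T.edgeSet × Fin (2 * ℓ + 2)))} (hS : IsStableSet (gadget T ℓ) S) :
    S.card ≤ stabNum T + (ℓ + 1) * Nat.card T.edgeSet := by
  set A := S.toLeft
  obtain ⟨B, hB, hAB⟩ := exists_isStableSet_card_add_le T A
    (({e : T.edgeSet | e.val ∈ A.sym2} : Finset T.edgeSet).map (.subtype _))
    fun u hu v hv huv => Finset.mem_map.2
      ⟨⟨s(u, v), huv⟩, mem_filter.2 ⟨mem_univ _, mk_mem_sym2_iff.2 ⟨hu, hv⟩⟩, rfl⟩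
  have hright : #S.toRight = ∑ e : T.edgeSet, #{k | .inr (e, k) ∈ S} := by
    rw [show S.toRight = ({p | .inr p ∈ S} : Finset _) by ext; simp, card_filter,
      Fintype.sum_prod_type]
    simp only [card_filter]
  have hends : #{e : T.edgeSet | e.val ∈ A.sym2} =
      ∑ e : T.edgeSet, if e.val ∈ A.sym2 then 1 else 0 :=
    card_filter _ _
  rw [card_map] at hAB
  calc #S = #A + #S.toRight := card_toLeft_add_card_toRight.symm
    _ ≤ #B + ∑ e : T.edgeSet,
          (#{k | .inr (e, k) ∈ S} + if e.val ∈ A.sym2 then 1 else 0) := by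
        rw [sum_add_distrib]
        omega
    _ ≤ stabNum T + ∑ _e : T.edgeSet, (ℓ + 1) :=
        add_le_add (le_stabNum T hB) (sum_le_sum fun e _ => card_path_add_le hS e)
    _ = stabNum T + (ℓ + 1) * Nat.card T.edgeSet := by
        simp [Nat.card_eq_fintype_card, mul_comm]

end Gadget

section GadgetLift

variable {α : Type*} [LinearOrder α] {T : SimpleGraph α} {ℓ : ℕ}

noncomputable def liftIndex (S : Finset α) (e : Sym2 α) (k : Fin (ℓ + 1)) : Fin (2 * ℓ + 2) :=
  ⟨2 * k + if sym2Min e ∈ S then 1 else 0, by split_ifs <;> omega⟩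

lemma liftIndex_injective (S : Finset α) (e : Sym2 α) :
    Function.Injective (liftIndex (ℓ := ℓ) S e) := fun i j h => by
  simp only [liftIndex, Fin.mk.injEq] at h
  omega

lemma not_adj_inl_inr_liftIndex {S : Finset α} (hS : IsStableSet T S) {u : α} (hu : u ∈ S)
    (e : T.edgeSet) (k : Fin (ℓ + 1)) :
    ¬ (gadget T ℓ).Adj (.inl u) (.inr (e, liftIndex S e.val k)) := by
  rw [gadget_adj_inl_inr]
  rintro (⟨h0, rfl⟩ | ⟨hlast, rfl⟩)
  · simp only [liftIndex, if_pos hu] at h0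
    omega
  · have hmin : sym2Min e.val ∈ S := by
      by_contra hmin
      simp only [liftIndex, if_neg hmin] at hlast
      omega
    exact hS _ hmin _ hu (adj_sym2Min_sym2Max e.2)

variable [Fintype α]

variable (T ℓ) in
noncomputable def gadgetLift (S : Finset α) : Finset (α ⊕ (T.edgeSet × Fin (2 * ℓ + 2))) :=
  S.map .inl ∪
    univ.image fun p : T.edgeSet × Fin (ℓ + 1) => .inr (p.1, liftIndex S p.1.val p.2)

lemma isStableSet_gadgetLift {S : Finset α} (hS : IsStableSet T S) :
    IsStableSet (gadget T ℓ) (gadgetLift T ℓ S) := by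
  intro x hx y hy hxy
  simp only [gadgetLift, mem_union, Finset.mem_map, mem_image, mem_univ, true_and,
    Function.Embedding.inl_apply] at hx hy
  rcases hx with ⟨u, hu, rfl⟩ | ⟨⟨e, i⟩, rfl⟩ <;>
    rcases hy with ⟨v, hv, rfl⟩ | ⟨⟨e', j⟩, rfl⟩
  · exact hxy
  · exact not_adj_inl_inr_liftIndex hS hu e' j hxy
  · exact not_adj_inl_inr_liftIndex hS hv e i hxy.symm
  · obtain ⟨rfl, h⟩ := gadget_adj_inr_inr.1 hxy
    simp only [liftIndex] at h
    omega

lemma card_gadgetLift (S : Finset α) :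
    (gadgetLift T ℓ S).card = S.card + (ℓ + 1) * Nat.card T.edgeSet := by
  have hinj : Function.Injective fun p : T.edgeSet × Fin (ℓ + 1) =>
      (.inr (p.1, liftIndex S p.1.val p.2) : α ⊕ (T.edgeSet × Fin (2 * ℓ + 2))) := by
    rintro ⟨e, i⟩ ⟨e', j⟩ h
    simp only [Sum.inr.injEq, Prod.mk.injEq] at h
    obtain ⟨rfl, h⟩ := h
    rw [liftIndex_injective S _ h]
  rw [gadgetLift, card_union_of_disjoint, card_map, card_image_of_injective _ hinj, card_univ,
    Fintype.card_prod, Fintype.card_fin, Nat.card_eq_fintype_card, mul_comm]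
  simp [disjoint_left]

end GadgetLift

theorem stabNum_gadget_general {α : Type*} [Fintype α] [LinearOrder α]
    (T : SimpleGraph α) (ℓ : ℕ) :
    stabNum (gadget T ℓ) = stabNum T + (ℓ + 1) * Nat.card T.edgeSet := by
  refine le_antisymm (stabNum_le _ fun S hS => card_le_of_isStableSet_gadget hS) ?_
  obtain ⟨S, hS, hcard⟩ := exists_isStableSet_card_eq_stabNum T
  rw [← hcard, ← card_gadgetLift]
  exact le_stabNum _ (isStableSet_gadgetLift hS)

/-- For a finite graph `T` and an even `ℓ ≥ 0`, the stability number of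
the gadget subdivision `T^g` equals `α(T) + (ℓ+1)·|E(T)|`. -/
theorem stabNum_gadget {α : Type*} [Fintype α] [LinearOrder α]
    (T : SimpleGraph α) (ℓ : ℕ) (hℓ : Even ℓ) :
    stabNum (gadget T ℓ) = stabNum T + (ℓ + 1) * Nat.card T.edgeSet :=
  stabNum_gadget_general T ℓ
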